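/- arXiv:2312.16447 — 7 statements merged into one kernel-verified Lean document; each statement's English description precedes it below -/
import Mathlib

section
/- The Cayley graph Cay(D_n, {b^{±β_1},...,b^{±β_s}, ab^{γ_1},...,ab^{γ_t}}) on the dihedral group D_n = ⟨a,b | a^2 = b^n = (ab)^2 = 1⟩ is connected if and only if gcd(n, β_1,...,β_s, γ_j - γ_k for 1 ≤ j < k ≤ t) = 1. -/
open DihedralGroup

/-- The Cayley graph of a group with connection set `S` (assumed symmetric):
vertices are group elements, `x` is adjacent to `y` iff `x ≠ y` and they differ by an
element of `S`. -/
def cayleyGraph {G : Type*} [Group G] (S : Set G) : SimpleGraph G :=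
  SimpleGraph.fromRel (fun x y => x⁻¹ * y ∈ S)

/-- The generating set `{b^{±β_1},…,b^{±β_s}, a b^{γ_1},…, a b^{γ_t}}` of the dihedral
group `D_n`, where `b = r 1` and `a = sr 0`, so `b^k = r k` and `a * b^k = sr k`. -/
def dihedralGenSet (n : ℕ) {s t : ℕ} (β : Fin s → ℕ) (γ : Fin t → ℕ) :
    Set (DihedralGroup n) :=
  (Set.range fun i => r (β i : ZMod n)) ∪ (Set.range fun i => r (-(β i : ZMod n))) ∪
    (Set.range fun j => sr (γ j : ZMod n))

/-- The number of spanning trees of a graph. -/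
noncomputable def numSpanningTrees {V : Type*} (G : SimpleGraph V) : ℕ :=
  Nat.card {H : G.Subgraph // H.IsSpanning ∧ H.coe.IsTree}

lemma cayley_adj_mul {G : Type*} [Group G] (S : Set G) (g x y : G)
    (h : (cayleyGraph S).Adj x y) : (cayleyGraph S).Adj (g*x) (g*y) := by
  simp only [cayleyGraph, SimpleGraph.fromRel_adj, mul_inv_rev, ne_eq] at h ⊢
  constructor
  · intro he; exact h.1 (mul_left_cancel he)
  · simpa [mul_assoc] using h.2

lemma cayley_reach_mul {G : Type*} [Group G] (S : Set G) (g x y : G)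
    (h : (cayleyGraph S).Reachable x y) : (cayleyGraph S).Reachable (g*x) (g*y) := by
  obtain ⟨w⟩ := h
  induction w with
  | nil => exact SimpleGraph.Reachable.refl _
  | cons h p ih => exact ((cayley_adj_mul S g _ _ h).reachable).trans ih

lemma cayley_connected_iff {G : Type*} [Group G] (S : Set G) :
    (cayleyGraph S).Connected ↔ Subgroup.closure S = ⊤ := by
  constructor
  · intro h
    rw [eq_top_iff]
    intro g _
    obtain ⟨w⟩ := h.preconnected 1 g
    have : ∀ {x y : G}, (cayleyGraph S).Walk x y → x ∈ Subgroup.closure S →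
        y ∈ Subgroup.closure S := by
      intro x y w
      induction w with
      | nil => exact id
      | cons h p ih =>
        rename_i a b c
        intro ha
        apply ih
        rcases h.2 with h' | h'
        · have : b = a * (a⁻¹ * b) := by group
          rw [this]; exact mul_mem ha (Subgroup.subset_closure h')
        · have : b = a * (b⁻¹ * a)⁻¹ := by group
          rw [this]; exact mul_mem ha (inv_mem (Subgroup.subset_closure h'))
    exact this w (one_mem _)
  · intro h
    haveI : Nonempty G := ⟨1⟩
    refine ⟨fun x y => ?_⟩
    have key : ∀ g : G, (cayleyGraph S).Reachable 1 g := by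
      intro g
      have hg : g ∈ Subgroup.closure S := h ▸ Subgroup.mem_top g
      induction hg using Subgroup.closure_induction with
      | mem u hu =>
        by_cases h1 : u = 1
        · rw [h1]
        · exact SimpleGraph.Adj.reachable (by
            simp only [cayleyGraph, SimpleGraph.fromRel_adj]
            exact ⟨fun he => h1 he.symm, Or.inl (by simpa using hu)⟩)
      | one => exact SimpleGraph.Reachable.refl _
      | mul u v _ _ hu hv =>
        exact hu.trans (by simpa using cayley_reach_mul S u 1 v hv)
      | inv u _ hu =>
        have := cayley_reach_mul S u⁻¹ 1 u hu
        simpa using this.symm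
    exact (key x).symm.trans (key y)

def dihSubgroup (n : ℕ) (A : AddSubgroup (ZMod n)) (c : ZMod n) : Subgroup (DihedralGroup n) where
  carrier := {g | match g with | r x => x ∈ A | sr x => x - c ∈ A}
  one_mem' := by simp only [one_def, Set.mem_setOf_eq]; exact zero_mem A
  mul_mem' := by
    rintro (⟨x⟩|⟨x⟩) (⟨y⟩|⟨y⟩) hx hy <;>
      simp only [Set.mem_setOf_eq, r_mul_r, r_mul_sr, sr_mul_r, sr_mul_sr] at *
    · exact add_mem hx hy
    · have h : y - x - c = (y - c) - x := by ring
      rw [h]; exact sub_mem hy hx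
    · have h : x + y - c = (x - c) + y := by ring
      rw [h]; exact add_mem hx hy
    · have h : y - x = (y - c) - (x - c) := by ring
      rw [h]; exact sub_mem hy hx
  inv_mem' := by
    rintro (⟨x⟩|⟨x⟩) hx <;> simp only [Set.mem_setOf_eq] at *
    · have h : (r x)⁻¹ = r (-x) := rfl
      rw [h]; exact neg_mem hx
    · have h : (sr x)⁻¹ = sr x := rfl
      rw [h]; exact hx

lemma mem_dihSubgroup_r {n : ℕ} (A : AddSubgroup (ZMod n)) (c x : ZMod n) :
    r x ∈ dihSubgroup n A c ↔ x ∈ A := Iff.rfl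

lemma mem_dihSubgroup_sr {n : ℕ} (A : AddSubgroup (ZMod n)) (c x : ZMod n) :
    sr x ∈ dihSubgroup n A c ↔ x - c ∈ A := Iff.rfl

/-- The additive subgroup of `ZMod n` of exponents of rotations in a subgroup. -/
def rPull (n : ℕ) (H : Subgroup (DihedralGroup n)) : AddSubgroup (ZMod n) where
  carrier := {x | r x ∈ H}
  zero_mem' := by
    have : (1 : DihedralGroup n) = r 0 := one_def
    simpa [Set.mem_setOf_eq, ← this] using H.one_mem
  add_mem' := by
    intro x y hx hy
    simpa [Set.mem_setOf_eq, ← r_mul_r] using H.mul_mem hx hy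
  neg_mem' := by
    intro x hx
    have h : (r x)⁻¹ = r (-x) := rfl
    show r (-x) ∈ H
    rw [← h]; exact H.inv_mem hx

theorem stmt0 (n s t : ℕ) (β : Fin s → ℕ) (γ : Fin t → ℕ)
    (hβpos : ∀ i, 0 < β i) (hβmono : StrictMono β) (hβlt : ∀ i, 2 * β i < n)
    (hγmono : StrictMono γ) (hγle : ∀ j, γ j ≤ n - 1) (ht : 0 < t) :
    (cayleyGraph (dihedralGenSet n β γ)).Connected ↔
      GCDMonoid.gcd (n : ℤ)
        (GCDMonoid.gcd ((Finset.univ : Finset (Fin s)).gcd fun i => (β i : ℤ))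
          (((Finset.univ : Finset (Fin t × Fin t)).filter fun p => p.1 < p.2).gcd
            fun p => (γ p.1 : ℤ) - (γ p.2 : ℤ))) = 1 := by
  rw [cayley_connected_iff]
  set S := dihedralGenSet n β γ with hS
  set d : ℤ := GCDMonoid.gcd (n : ℤ)
        (GCDMonoid.gcd ((Finset.univ : Finset (Fin s)).gcd fun i => (β i : ℤ))
          (((Finset.univ : Finset (Fin t × Fin t)).filter fun p => p.1 < p.2).gcd
            fun p => (γ p.1 : ℤ) - (γ p.2 : ℤ))) with hd
  set j0 : Fin t := ⟨0, ht⟩ with hj0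
  have hdn : d ∣ (n : ℤ) := gcd_dvd_left _ _
  have hdβ : ∀ i, d ∣ (β i : ℤ) := fun i =>
    dvd_trans ((gcd_dvd_right _ _).trans (gcd_dvd_left _ _))
      (Finset.gcd_dvd (Finset.mem_univ i))
  have hdP : d ∣ (((Finset.univ : Finset (Fin t × Fin t)).filter fun p => p.1 < p.2).gcd
      fun p => (γ p.1 : ℤ) - (γ p.2 : ℤ)) :=
    (gcd_dvd_right _ _).trans (gcd_dvd_right _ _)
  have hdγ : ∀ j k : Fin t, d ∣ (γ j : ℤ) - (γ k : ℤ) := by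
    intro j k
    rcases lt_trichotomy j k with h | h | h
    · exact hdP.trans (Finset.gcd_dvd (Finset.mem_filter.2 ⟨Finset.mem_univ (j, k), h⟩))
    · subst h; simp
    · have := hdP.trans (Finset.gcd_dvd (Finset.mem_filter.2 ⟨Finset.mem_univ (k, j), h⟩))
      have h2 : (γ j : ℤ) - (γ k : ℤ) = -((γ k : ℤ) - (γ j : ℤ)) := by ring
      rw [h2]; exact this.neg_right
  constructor
  · -- connected → gcd = 1
    intro htop
    by_contra hd1
    set A : AddSubgroup (ZMod n) :=
      (AddSubgroup.zmultiples d).map (Int.castAddHom (ZMod n)) with hA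
    have hSH : S ⊆ (dihSubgroup n A ((γ j0 : ZMod n)) : Set (DihedralGroup n)) := by
      rintro x ((⟨i, rfl⟩ | ⟨i, rfl⟩) | ⟨j, rfl⟩)
      · rw [SetLike.mem_coe, mem_dihSubgroup_r]
        exact ⟨(β i : ℤ), Int.mem_zmultiples_iff.2 (hdβ i),
          by simp only [Int.coe_castAddHom]; push_cast; ring⟩
      · rw [SetLike.mem_coe, mem_dihSubgroup_r]
        exact A.neg_mem ⟨(β i : ℤ), Int.mem_zmultiples_iff.2 (hdβ i),
          by simp only [Int.coe_castAddHom]; push_cast; ring⟩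
      · rw [SetLike.mem_coe, mem_dihSubgroup_sr]
        exact ⟨(γ j : ℤ) - (γ j0 : ℤ), Int.mem_zmultiples_iff.2 (hdγ j j0),
          by simp only [Int.coe_castAddHom]; push_cast; ring⟩
    have hle := (Subgroup.closure_le _).2 hSH
    rw [htop] at hle
    have h1 : r (1 : ZMod n) ∈ dihSubgroup n A ((γ j0 : ZMod n)) := hle (Subgroup.mem_top _)
    rw [mem_dihSubgroup_r] at h1
    obtain ⟨k, hk, hcast⟩ := h1
    rw [SetLike.mem_coe, Int.mem_zmultiples_iff] at hk
    simp only [Int.coe_castAddHom] at hcast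
    have h2 : ((k - 1 : ℤ) : ZMod n) = 0 := by push_cast; rw [hcast]; ring
    have h3 : (n : ℤ) ∣ k - 1 := (ZMod.intCast_zmod_eq_zero_iff_dvd _ _).1 h2
    have hdvd1 : d ∣ 1 := by
      have h4 : d ∣ k - (k - 1) := dvd_sub hk (hdn.trans h3)
      simpa using h4
    have : d = 1 := by
      have hnorm : normalize d = d := by rw [hd]; exact normalize_gcd _ _
      rw [← hnorm, normalize_eq_one]
      exact isUnit_of_dvd_one hdvd1
    exact hd1 this
  · -- gcd = 1 → closure = ⊤
    intro hd1
    set A₀ : AddSubgroup (ZMod n) := rPull n (Subgroup.closure S) with hA₀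
    set B : AddSubgroup ℤ := A₀.comap (Int.castAddHom (ZMod n)) with hB
    have memB : ∀ z : ℤ, z ∈ B ↔ r ((z : ZMod n)) ∈ Subgroup.closure S := fun z => Iff.rfl
    obtain ⟨g, hg⟩ := Int.subgroup_cyclic B
    have memB' : ∀ z : ℤ, z ∈ B ↔ g ∣ z := by
      intro z
      rw [hg, ← AddSubgroup.zmultiples_eq_closure, Int.mem_zmultiples_iff]
    have hn : (n : ℤ) ∈ B := by
      rw [memB]
      have : ((n : ℤ) : ZMod n) = 0 := by push_cast; simp
      rw [this, ← one_def]
      exact one_mem _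
    have hβB : ∀ i, ((β i : ℕ) : ℤ) ∈ B := by
      intro i
      rw [memB]
      have : (((β i : ℕ) : ℤ) : ZMod n) = ((β i : ℕ) : ZMod n) := by push_cast; rfl
      rw [this]
      exact Subgroup.subset_closure (Or.inl (Or.inl ⟨i, rfl⟩))
    have hγB : ∀ j k : Fin t, (γ j : ℤ) - (γ k : ℤ) ∈ B := by
      intro j k
      rw [memB]
      have hcast : (((γ j : ℤ) - (γ k : ℤ) : ℤ) : ZMod n) =
          ((γ j : ℕ) : ZMod n) - ((γ k : ℕ) : ZMod n) := by push_cast; ring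
      rw [hcast, ← sr_mul_sr]
      exact mul_mem (Subgroup.subset_closure (Or.inr ⟨k, rfl⟩))
        (Subgroup.subset_closure (Or.inr ⟨j, rfl⟩))
    have hgd : g ∣ d := by
      rw [hd]
      refine dvd_gcd ((memB' _).1 hn) (dvd_gcd ?_ ?_)
      · exact Finset.dvd_gcd fun i _ => (memB' _).1 (hβB i)
      · exact Finset.dvd_gcd fun p _ => (memB' _).1 (hγB p.1 p.2)
    have h1B : (1 : ℤ) ∈ B := (memB' 1).2 (hd1 ▸ hgd)
    have h1 : r (1 : ZMod n) ∈ Subgroup.closure S := by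
      have := (memB 1).1 h1B
      simpa using this
    have hr : ∀ x : ZMod n, r x ∈ Subgroup.closure S := by
      intro x
      obtain ⟨k, rfl⟩ := ZMod.intCast_surjective x
      exact (memB k).1 ((memB' k).2 (((memB' 1).1 h1B).trans (one_dvd k)))
    have hsr : ∀ x : ZMod n, sr x ∈ Subgroup.closure S := by
      intro x
      have hs : sr ((γ j0 : ZMod n)) ∈ Subgroup.closure S :=
        Subgroup.subset_closure (Or.inr ⟨j0, rfl⟩)
      have : r ((γ j0 : ZMod n) - x) * sr ((γ j0 : ZMod n)) = sr x := by
        rw [r_mul_sr]; ring_nf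
      rw [← this]
      exact mul_mem (hr _) hs
    rw [Subgroup.eq_top_iff']
    rintro (⟨x⟩|⟨x⟩)
    · exact hr x
    · exact hsr x
end

section
/- The set S = {b^{±β_1},...,b^{±β_s}, ab^{γ_1},...,ab^{γ_t}} generates the dihedral group D_n if and only if gcd(n, β_1,...,β_s, γ_j − γ_k for 1 ≤ j < k ≤ t) = 1. -/
open DihedralGroup

lemma span_finset_gcd (T : Finset ℤ) : Ideal.span (T : Set ℤ) = Ideal.span {T.gcd id} := by
  classical
  induction T using Finset.induction_on with
  | empty => simp only [Finset.coe_empty, Ideal.span_empty, Finset.gcd_empty]; exact (Ideal.span_singleton_eq_bot.mpr rfl).symm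
  | insert _ _ h ih =>
    rename_i a s
    rw [Finset.coe_insert, Ideal.span_insert, ih, Finset.gcd_insert, span_gcd,
      Ideal.span_insert]
    rfl

lemma closure_int_eq_top_iff_isUnit_gcd (T : Finset ℤ) :
    AddSubgroup.closure (T : Set ℤ) = ⊤ ↔ IsUnit (T.gcd id) := by
  have h1 : (Submodule.span ℤ (T : Set ℤ)).toAddSubgroup = AddSubgroup.closure (T : Set ℤ) :=
    Submodule.span_int_eq_addSubgroupClosure _
  have key : AddSubgroup.closure (T : Set ℤ) = ⊤ ↔ Ideal.span (T : Set ℤ) = ⊤ := by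
    rw [← h1]
    constructor
    · intro h
      ext x
      simp only [Submodule.mem_top, iff_true]
      exact (Submodule.mem_toAddSubgroup _).mp (h ▸ AddSubgroup.mem_top x)
    · intro h
      rw [show Ideal.span (T : Set ℤ) = Submodule.span ℤ (T : Set ℤ) from rfl] at h
      rw [h, Submodule.top_toAddSubgroup]
  rw [key, span_finset_gcd, Ideal.span_singleton_eq_top]

lemma closure_zmod_image_eq_top_iff (n : ℕ) (T : Finset ℤ) (hn : (n : ℤ) ∈ T) :
    AddSubgroup.closure ((fun x : ℤ => (x : ZMod n)) '' (T : Set ℤ)) = ⊤ ↔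
      AddSubgroup.closure (T : Set ℤ) = ⊤ := by
  have hmap : AddSubgroup.closure ((fun x : ℤ => (x : ZMod n)) '' (T : Set ℤ)) =
      (AddSubgroup.closure (T : Set ℤ)).map (Int.castAddHom (ZMod n)) :=
    (AddMonoidHom.map_closure (Int.castAddHom (ZMod n)) _).symm
  have hker : (Int.castAddHom (ZMod n)).ker ≤ AddSubgroup.closure (T : Set ℤ) := by
    rw [ZMod.ker_intCastAddHom, AddSubgroup.zmultiples_eq_closure]
    exact AddSubgroup.closure_mono (Set.singleton_subset_iff.mpr hn)
  rw [hmap]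
  constructor
  · intro h
    have h2 := congrArg (AddSubgroup.comap (Int.castAddHom (ZMod n))) h
    rw [AddSubgroup.comap_map_eq, AddSubgroup.comap_top, sup_of_le_left hker] at h2
    exact h2
  · intro h
    rw [h]
    exact AddSubgroup.map_top_of_surjective _ ZMod.intCast_surjective

theorem stmt1 (n s t : ℕ) (β : Fin s → ℕ) (γ : Fin t → ℕ)
    (hβpos : ∀ i, 0 < β i) (hβmono : StrictMono β) (hβlt : ∀ i, 2 * β i < n)
    (hγmono : StrictMono γ) (hγle : ∀ j, γ j ≤ n - 1) (ht : 0 < t) :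
    Subgroup.closure (dihedralGenSet n β γ) = ⊤ ↔
      GCDMonoid.gcd (n : ℤ)
        (GCDMonoid.gcd ((Finset.univ : Finset (Fin s)).gcd fun i => (β i : ℤ))
          (((Finset.univ : Finset (Fin t × Fin t)).filter fun p => p.1 < p.2).gcd
            fun p => (γ p.1 : ℤ) - (γ p.2 : ℤ))) = 1 := by
  classical
  set j0 : Fin t := ⟨0, ht⟩ with hj0
  set γ₀ : ZMod n := (γ j0 : ZMod n) with hγ₀
  set T : Finset ℤ := insert (n : ℤ)
      ((Finset.univ.image fun i : Fin s => (β i : ℤ)) ∪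
        ((Finset.univ.filter fun p : Fin t × Fin t => p.1 < p.2).image
          fun p => (γ p.1 : ℤ) - (γ p.2 : ℤ))) with hT
  set A : Set (ZMod n) := (fun x : ℤ => (x : ZMod n)) '' (T : Set ℤ) with hA
  have hβA : ∀ i, ((β i : ZMod n)) ∈ A := by
    intro i
    refine ⟨(β i : ℤ), ?_, by push_cast; rfl⟩
    rw [hT]
    simp
  have hdA : ∀ p : Fin t × Fin t, p.1 < p.2 → ((γ p.1 : ZMod n) - (γ p.2 : ZMod n)) ∈ A := by
    intro p hp
    refine ⟨(γ p.1 : ℤ) - (γ p.2 : ℤ), ?_, by push_cast; rfl⟩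
    rw [hT]
    simp only [Finset.coe_insert, Set.mem_insert_iff, Finset.coe_union, Set.mem_union,
      Finset.mem_coe, Finset.mem_image, Finset.mem_filter, Finset.mem_univ, true_and]
    exact Or.inr (Or.inr ⟨p, hp, rfl⟩)
  have step1 : Subgroup.closure (dihedralGenSet n β γ) = ⊤ ↔ AddSubgroup.closure A = ⊤ := by
    constructor
    · intro h
      set H := AddSubgroup.closure A with hH
      let K : Subgroup (DihedralGroup n) :=
        { carrier := {g | match g with | r x => x ∈ H | sr x => x - γ₀ ∈ H}
          one_mem' := by
            show (0 : ZMod n) ∈ H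
            exact zero_mem H
          mul_mem' := by
            rintro (x | x) (y | y) hx hy
            · show x + y ∈ H
              exact add_mem hx hy
            · show (y - x) - γ₀ ∈ H
              rw [show (y - x) - γ₀ = (y - γ₀) - x by ring]
              exact sub_mem hy hx
            · show (x + y) - γ₀ ∈ H
              rw [show (x + y) - γ₀ = (x - γ₀) + y by ring]
              exact add_mem hx hy
            · show (y - x) ∈ H
              rw [show y - x = (y - γ₀) - (x - γ₀) by ring]
              exact sub_mem hy hx
          inv_mem' := by
            rintro (x | x) hx
            · show -x ∈ H
              exact neg_mem hx
            · exact hx }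
      have hSK : dihedralGenSet n β γ ⊆ ↑K := by
        rintro g ((⟨i, rfl⟩ | ⟨i, rfl⟩) | ⟨j, rfl⟩)
        · show (β i : ZMod n) ∈ H
          exact AddSubgroup.subset_closure (hβA i)
        · show -(β i : ZMod n) ∈ H
          exact neg_mem (AddSubgroup.subset_closure (hβA i))
        · show (γ j : ZMod n) - γ₀ ∈ H
          by_cases hj : j = j0
          · rw [hj, hγ₀, sub_self]
            exact zero_mem H
          · have hlt : j0 < j := by
              rw [Fin.lt_def]
              exact Nat.pos_of_ne_zero fun h0 => hj (Fin.ext h0)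
            have hm := AddSubgroup.subset_closure (hdA (j0, j) hlt)
            rw [show (γ j : ZMod n) - γ₀ = -((γ j0 : ZMod n) - (γ j : ZMod n)) by rw [hγ₀]; ring]
            exact neg_mem hm
      have hle : (⊤ : Subgroup (DihedralGroup n)) ≤ K := h ▸ (Subgroup.closure_le K).mpr hSK
      rw [eq_top_iff]
      intro x _
      exact hle (Subgroup.mem_top (r x))
    · intro h
      have hr : ∀ x : ZMod n, r x ∈ Subgroup.closure (dihedralGenSet n β γ) := by
        let M : AddSubgroup (ZMod n) :=
          { carrier := {x | r x ∈ Subgroup.closure (dihedralGenSet n β γ)}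
            zero_mem' := by
              show r 0 ∈ Subgroup.closure (dihedralGenSet n β γ)
              rw [← one_def]
              exact one_mem _
            add_mem' := by
              intro x y hx hy
              show r (x + y) ∈ Subgroup.closure (dihedralGenSet n β γ)
              rw [← r_mul_r]
              exact mul_mem hx hy
            neg_mem' := by
              intro x hx
              show r (-x) ∈ Subgroup.closure (dihedralGenSet n β γ)
              rw [show r (-x) = (r x)⁻¹ from rfl]
              exact inv_mem hx }
        have hAM : A ⊆ ↑M := by
          rintro x ⟨z, hz, rfl⟩
          rw [hT] at hz
          simp only [Finset.coe_insert, Set.mem_insert_iff, Finset.coe_union, Set.mem_union,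
            Finset.mem_coe, Finset.mem_image, Finset.mem_filter, Finset.mem_univ,
            true_and] at hz
          rcases hz with rfl | (⟨i, -, rfl⟩ | ⟨p, hp, rfl⟩)
          · show r (((n : ℤ) : ZMod n)) ∈ Subgroup.closure (dihedralGenSet n β γ)
            rw [show (((n : ℤ)) : ZMod n) = 0 by push_cast; exact ZMod.natCast_self n, ← one_def]
            exact one_mem _
          · show r (((β i : ℤ) : ZMod n)) ∈ Subgroup.closure (dihedralGenSet n β γ)
            rw [show (((β i : ℤ)) : ZMod n) = (β i : ZMod n) by push_cast; rfl]
            exact Subgroup.subset_closure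
              (Set.mem_union_left _ (Set.mem_union_left _ ⟨i, rfl⟩))
          · show r ((Int.cast ((γ p.1 : ℤ) - (γ p.2 : ℤ)) : ZMod n)) ∈
                Subgroup.closure (dihedralGenSet n β γ)
            rw [show (Int.cast ((γ p.1 : ℤ) - (γ p.2 : ℤ)) : ZMod n)
                = (γ p.1 : ZMod n) - (γ p.2 : ZMod n) by push_cast; rfl]
            rw [show r ((γ p.1 : ZMod n) - (γ p.2 : ZMod n))
                = sr (γ p.2 : ZMod n) * sr (γ p.1 : ZMod n) from (sr_mul_sr _ _).symm]
            exact mul_mem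
              (Subgroup.subset_closure (Set.mem_union_right _ ⟨p.2, rfl⟩))
              (Subgroup.subset_closure (Set.mem_union_right _ ⟨p.1, rfl⟩))
        have hle : AddSubgroup.closure A ≤ M := (AddSubgroup.closure_le M).mpr hAM
        rw [h] at hle
        intro x
        exact hle (AddSubgroup.mem_top x)
      rw [eq_top_iff]
      rintro (x | x) -
      · exact hr x
      · rw [show sr x = sr γ₀ * r (x - γ₀) by rw [sr_mul_r]; congr 1; ring]
        exact mul_mem
          (Subgroup.subset_closure (Set.mem_union_right _ ⟨j0, rfl⟩))
          (hr _)
  have hnT : (n : ℤ) ∈ T := by rw [hT]; exact Finset.mem_insert_self _ _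
  rw [step1, hA, closure_zmod_image_eq_top_iff n T hnT, closure_int_eq_top_iff_isUnit_gcd]
  have hTg : T.gcd id = GCDMonoid.gcd (n : ℤ)
      (GCDMonoid.gcd ((Finset.univ : Finset (Fin s)).gcd fun i => (β i : ℤ))
        (((Finset.univ : Finset (Fin t × Fin t)).filter fun p => p.1 < p.2).gcd
          fun p => (γ p.1 : ℤ) - (γ p.2 : ℤ))) := by
    rw [hT, Finset.gcd_insert, Finset.gcd_union, Finset.gcd_image, Finset.gcd_image]
    rfl
  rw [hTg]
  constructor
  · intro h
    rcases Int.isUnit_iff.mp h with h1 | h1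
    · exact h1
    · exfalso
      have h0 : (0 : ℤ) ≤ GCDMonoid.gcd (n : ℤ)
          (GCDMonoid.gcd ((Finset.univ : Finset (Fin s)).gcd fun i => (β i : ℤ))
            (((Finset.univ : Finset (Fin t × Fin t)).filter fun p => p.1 < p.2).gcd
              fun p => (γ p.1 : ℤ) - (γ p.2 : ℤ))) := by
        rw [← Int.coe_gcd]
        exact Int.natCast_nonneg _
      rw [h1] at h0
      omega
  · intro h
    rw [h]
    exact isUnit_one
end

section
/- For P(z) = A(z)A(z^{-1}) − B(z)B(z^{-1}) with A(z) = 2s + t − Σ_{i=1}^s (z^{β_i} + z^{−β_i}) and B(z) = −Σ_{i=1}^t z^{γ_i}, the second derivative at 1 satisfies P″(1) = −4t Σ_{j=1}^s β_j² + 2(Σ_{j=1}^t γ_j)² − 2t Σ_{j=1}^t γ_j². -/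
theorem stmt3 (s t : ℕ) (ht : 1 ≤ t) (β : Fin s → ℤ) (γ : Fin t → ℤ)
    (A B P : ℝ → ℝ)
    (hA : ∀ z : ℝ, A z = (2 * s + t : ℝ) - ∑ i, (z ^ (β i) + z ^ (-β i)))
    (hB : ∀ z : ℝ, B z = -∑ i, z ^ (γ i))
    (hP : ∀ z : ℝ, P z = A z * A z⁻¹ - B z * B z⁻¹) :
    deriv (deriv P) 1 =
      -4 * t * ∑ j, (β j : ℝ) ^ 2 + 2 * (∑ j, (γ j : ℝ)) ^ 2 - 2 * t * ∑ j, (γ j : ℝ) ^ 2 := by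
  set c : ℝ := 2 * s + t with hc
  -- explicit Laurent form of P away from 0
  have hPQ : ∀ z : ℝ, z ≠ 0 → P z =
      (c - ∑ i, (z ^ (β i) + z ^ (-β i)))^2 - ∑ i, ∑ j, z ^ (γ i - γ j) := by
    intro z hz
    rw [hP, hA, hA, hB, hB]
    have h1 : ∀ n : ℤ, (z⁻¹) ^ n = z ^ (-n) := fun n => by rw [inv_zpow, ← zpow_neg]
    have hAsym : (∑ i, ((z⁻¹) ^ (β i) + (z⁻¹) ^ (-β i)))
        = ∑ i, (z ^ (β i) + z ^ (-β i)) := by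
      simp only [h1, neg_neg]; exact Finset.sum_congr rfl fun i _ => add_comm _ _
    rw [hAsym, neg_mul_neg, Finset.sum_mul_sum]
    have h2 : ∀ i j : Fin t, z ^ γ i * (z⁻¹) ^ γ j = z ^ (γ i - γ j) := fun i j => by
      rw [h1, ← zpow_add₀ hz, sub_eq_add_neg]
    simp only [h2]
    ring
  -- first derivative of the explicit form, for z ≠ 0
  have hS : ∀ z : ℝ, z ≠ 0 → HasDerivAt (fun z : ℝ => ∑ i, (z ^ (β i) + z ^ (-β i)))
      (∑ i, ((β i : ℝ) * z ^ (β i - 1) + ((-β i : ℤ) : ℝ) * z ^ (-β i - 1))) z :=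
    fun z hz => HasDerivAt.fun_sum fun i _ =>
      (hasDerivAt_zpow (β i) z (Or.inl hz)).add (hasDerivAt_zpow (-β i) z (Or.inl hz))
  have hT : ∀ z : ℝ, z ≠ 0 → HasDerivAt (fun z : ℝ => ∑ i, ∑ j, z ^ (γ i - γ j))
      (∑ i, ∑ j, ((γ i - γ j : ℤ) : ℝ) * z ^ (γ i - γ j - 1)) z :=
    fun z hz => HasDerivAt.fun_sum fun i _ => HasDerivAt.fun_sum fun j _ =>
      hasDerivAt_zpow (γ i - γ j) z (Or.inl hz)
  have hQ : ∀ z : ℝ, z ≠ 0 → HasDerivAt (fun z : ℝ =>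
      (c - ∑ i, (z ^ (β i) + z ^ (-β i)))^2 - ∑ i, ∑ j, z ^ (γ i - γ j))
      (2 * (c - ∑ i, (z ^ (β i) + z ^ (-β i))) *
        (-(∑ i, ((β i : ℝ) * z ^ (β i - 1) + ((-β i : ℤ) : ℝ) * z ^ (-β i - 1))))
       - ∑ i, ∑ j, ((γ i - γ j : ℤ) : ℝ) * z ^ (γ i - γ j - 1)) z := by
    intro z hz
    have h1 := ((hasDerivAt_const z c).fun_sub (hS z hz)).fun_pow 2
    refine (h1.fun_sub (hT z hz)).congr_deriv ?_
    push_cast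
    ring
  -- deriv P agrees with the explicit derivative D near 1
  set D : ℝ → ℝ := fun z =>
      2 * (c - ∑ i, (z ^ (β i) + z ^ (-β i))) *
        (-(∑ i, ((β i : ℝ) * z ^ (β i - 1) + ((-β i : ℤ) : ℝ) * z ^ (-β i - 1))))
       - ∑ i, ∑ j, ((γ i - γ j : ℤ) : ℝ) * z ^ (γ i - γ j - 1) with hD
  have hne : ∀ᶠ z in nhds (1 : ℝ), z ≠ 0 := eventually_ne_nhds one_ne_zero
  have hderivP : deriv P =ᶠ[nhds (1 : ℝ)] D := by
    filter_upwards [hne] with z hz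
    have hloc : P =ᶠ[nhds z] fun z : ℝ =>
        (c - ∑ i, (z ^ (β i) + z ^ (-β i)))^2 - ∑ i, ∑ j, z ^ (γ i - γ j) := by
      filter_upwards [eventually_ne_nhds hz] with w hw using hPQ w hw
    rw [hloc.deriv_eq, (hQ z hz).deriv]
  -- second derivative of D at 1
  have hS1 : HasDerivAt (fun z : ℝ =>
      ∑ i, ((β i : ℝ) * z ^ (β i - 1) + ((-β i : ℤ) : ℝ) * z ^ (-β i - 1)))
      (∑ i, ((β i : ℝ) * (((β i - 1 : ℤ) : ℝ) * (1:ℝ) ^ (β i - 1 - 1))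
        + ((-β i : ℤ) : ℝ) * (((-β i - 1 : ℤ) : ℝ) * (1:ℝ) ^ (-β i - 1 - 1)))) 1 :=
    HasDerivAt.fun_sum fun i _ =>
      ((hasDerivAt_zpow (β i - 1) 1 (Or.inl one_ne_zero)).const_mul _).add
        ((hasDerivAt_zpow (-β i - 1) 1 (Or.inl one_ne_zero)).const_mul _)
  have hT1 : HasDerivAt (fun z : ℝ => ∑ i, ∑ j, ((γ i - γ j : ℤ) : ℝ) * z ^ (γ i - γ j - 1))
      (∑ i, ∑ j, ((γ i - γ j : ℤ) : ℝ) * (((γ i - γ j - 1 : ℤ) : ℝ) * (1:ℝ) ^ (γ i - γ j - 1 - 1))) 1 :=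
    HasDerivAt.fun_sum fun i _ => HasDerivAt.fun_sum fun j _ =>
      (hasDerivAt_zpow (γ i - γ j - 1) 1 (Or.inl one_ne_zero)).const_mul _
  have hDderiv := ((((hasDerivAt_const (1:ℝ) c).fun_sub (hS 1 one_ne_zero)).const_mul 2).fun_mul
      hS1.fun_neg).fun_sub hT1
  rw [hderivP.deriv_eq, hDderiv.deriv]
  -- evaluate and simplify
  have key : ∑ i, ∑ j, (((γ i:ℝ) - γ j) * ((γ i:ℝ) - γ j - 1))
      = 2*t*∑ j, (γ j:ℝ)^2 - 2*(∑ j, (γ j:ℝ))^2 := by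
    have h1 : ∀ i j : Fin t, ((γ i:ℝ) - γ j) * ((γ i:ℝ) - γ j - 1)
        = (γ i:ℝ)^2 + (γ j:ℝ)^2 - (2*(γ i:ℝ))*(γ j:ℝ) - (γ i:ℝ) + (γ j:ℝ) := by
      intro i j; ring
    simp only [h1, Finset.sum_add_distrib, Finset.sum_sub_distrib, Finset.sum_const,
      ← Finset.mul_sum, Finset.card_univ, Fintype.card_fin, nsmul_eq_mul, ← Finset.sum_mul]
    rw [pow_two]
    ring
  have keyβ : ∑ i, ((β i : ℝ) * ((β i : ℝ) - 1) + (-(β i : ℝ)) * (-(β i : ℝ) - 1))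
      = 2 * ∑ j, (β j : ℝ)^2 := by
    rw [Finset.mul_sum]
    exact Finset.sum_congr rfl fun i _ => by ring
  simp only [one_zpow, mul_one, hc]
  push_cast
  have h0 : ∑ x : Fin s, ((β x:ℝ) + -(β x:ℝ)) = 0 := by simp
  have h2 : ∑ _x : Fin s, (1+1:ℝ) = 2*s := by simp; ring
  rw [key, keyβ, h0, h2]
  ring
end

section
/- P″(1) = −2(2t Σ_{j=1}^s β_j² + Σ_{1≤j<k≤t} (γ_j − γ_k)²), and if not all of the numbers β_1,...,β_s and γ_j − γ_k (1 ≤ j < k ≤ t) are zero then P″(1) < 0. -/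
open Finset

private lemma sum_pm_hasDerivAt {ι : Type*} [Fintype ι] (β : ι → ℤ) {z : ℝ} (hz : z ≠ 0) :
    HasDerivAt (fun z : ℝ => ∑ i, (z ^ (β i) + z ^ (-β i)))
      (∑ i, ((β i : ℝ) * z ^ (β i - 1) + (-β i : ℝ) * z ^ (-β i - 1))) z := by
  apply HasDerivAt.fun_sum
  intro i _
  have h1 := hasDerivAt_zpow (β i) z (Or.inl hz)
  have h2 := hasDerivAt_zpow (-β i) z (Or.inl hz)
  have h3 : HasDerivAt (fun y : ℝ => y ^ (β i) + y ^ (-β i)) _ z := h1.add h2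
  simpa using h3

private lemma sum2_hasDerivAt {ι : Type*} [Fintype ι] (a b : ι → ℝ) (m n : ι → ℤ) {z : ℝ}
    (hz : z ≠ 0) :
    HasDerivAt (fun z : ℝ => ∑ i, (a i * z ^ (m i) + b i * z ^ (n i)))
      (∑ i, (a i * ((m i : ℝ) * z ^ (m i - 1)) + b i * ((n i : ℝ) * z ^ (n i - 1)))) z := by
  apply HasDerivAt.fun_sum
  intro i _
  exact ((hasDerivAt_zpow (m i) z (Or.inl hz)).const_mul (a i)).add
    ((hasDerivAt_zpow (n i) z (Or.inl hz)).const_mul (b i))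

private lemma dsum_hasDerivAt {ι κ : Type*} [Fintype ι] [Fintype κ] (e : ι → κ → ℤ) {z : ℝ}
    (hz : z ≠ 0) :
    HasDerivAt (fun z : ℝ => ∑ j, ∑ k, z ^ (e j k))
      (∑ j, ∑ k, (e j k : ℝ) * z ^ (e j k - 1)) z := by
  apply HasDerivAt.fun_sum
  intro j _
  exact HasDerivAt.fun_sum fun k _ => hasDerivAt_zpow (e j k) z (Or.inl hz)

private lemma dsum2_hasDerivAt {ι κ : Type*} [Fintype ι] [Fintype κ] (c : ι → κ → ℝ)
    (e : ι → κ → ℤ) {z : ℝ} (hz : z ≠ 0) :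
    HasDerivAt (fun z : ℝ => ∑ j, ∑ k, c j k * z ^ (e j k))
      (∑ j, ∑ k, c j k * ((e j k : ℝ) * z ^ (e j k - 1))) z := by
  apply HasDerivAt.fun_sum
  intro j _
  exact HasDerivAt.fun_sum fun k _ => (hasDerivAt_zpow (e j k) z (Or.inl hz)).const_mul (c j k)

private lemma dsum_sub_zero {t : ℕ} (γ : Fin t → ℤ) :
    ∑ j, ∑ k, ((γ j : ℝ) - γ k) = 0 := by
  simp [Finset.sum_sub_distrib, Finset.sum_comm, ← Finset.mul_sum]

private lemma dsum_sq_eq {t : ℕ} (γ : Fin t → ℤ) :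
    ∑ j, ∑ k, ((γ j : ℝ) - γ k) ^ 2 =
      2 * ∑ p ∈ (Finset.univ : Finset (Fin t × Fin t)).filter fun p => p.1 < p.2,
          ((γ p.1 : ℝ) - (γ p.2 : ℝ)) ^ 2 := by
  classical
  set g : Fin t × Fin t → ℝ := fun p => ((γ p.1 : ℝ) - γ p.2) ^ 2 with hg
  have h0 : ∑ j, ∑ k, ((γ j : ℝ) - γ k) ^ 2 = ∑ p : Fin t × Fin t, g p := by
    rw [← Finset.univ_product_univ, Finset.sum_product]
  rw [h0]
  rw [← Finset.sum_filter_add_sum_filter_not Finset.univ (fun p : Fin t × Fin t => p.1 < p.2) g]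
  have hswap : ∑ p ∈ Finset.univ.filter (fun p : Fin t × Fin t => ¬ p.1 < p.2), g p
      = ∑ p ∈ Finset.univ.filter (fun p : Fin t × Fin t => p.1 < p.2), g p := by
    have h1 : ∑ p ∈ Finset.univ.filter (fun p : Fin t × Fin t => ¬ p.1 < p.2), g p
        = ∑ p ∈ Finset.univ.filter (fun p : Fin t × Fin t => p.2 < p.1), g p := by
      rw [← Finset.sum_filter_add_sum_filter_not
        (Finset.univ.filter (fun p : Fin t × Fin t => ¬ p.1 < p.2))
        (fun p => p.2 < p.1) g]
      have hzz : ∑ p ∈ (Finset.univ.filter (fun p : Fin t × Fin t => ¬ p.1 < p.2)).filter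
          (fun p => ¬ p.2 < p.1), g p = 0 := by
        apply Finset.sum_eq_zero
        intro p hp
        simp only [Finset.mem_filter] at hp
        have : p.1 = p.2 := le_antisymm (not_lt.mp hp.2) (not_lt.mp hp.1.2)
        simp [hg, this]
      have hf : (Finset.univ.filter (fun p : Fin t × Fin t => ¬ p.1 < p.2)).filter
          (fun p => p.2 < p.1) = Finset.univ.filter (fun p : Fin t × Fin t => p.2 < p.1) := by
        ext p
        simp only [Finset.mem_filter, Finset.mem_univ, true_and]
        exact ⟨fun h => h.2, fun h => ⟨asymm h, h⟩⟩
      rw [hzz, add_zero, hf]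
    rw [h1]
    apply Finset.sum_nbij' (fun p => Prod.swap p) (fun p => Prod.swap p)
    · intro p hp; simp only [Finset.mem_filter, Finset.mem_univ, true_and] at hp ⊢; exact hp
    · intro p hp; simp only [Finset.mem_filter, Finset.mem_univ, true_and] at hp ⊢; exact hp
    · intro p _; simp
    · intro p _; simp
    · intro p _; simp only [hg, Prod.fst_swap, Prod.snd_swap]; ring
  rw [hswap]; ring

theorem stmt4 (s t : ℕ) (ht : 1 ≤ t) (β : Fin s → ℤ) (γ : Fin t → ℤ)
    (A B P : ℝ → ℝ)
    (hA : ∀ z : ℝ, A z = (2 * s + t : ℝ) - ∑ i, (z ^ (β i) + z ^ (-β i)))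
    (hB : ∀ z : ℝ, B z = -∑ i, z ^ (γ i))
    (hP : ∀ z : ℝ, P z = A z * A z⁻¹ - B z * B z⁻¹) :
    deriv (deriv P) 1 =
      -2 * (2 * t * ∑ j, (β j : ℝ) ^ 2 +
        ∑ p ∈ (Finset.univ : Finset (Fin t × Fin t)).filter fun p => p.1 < p.2,
          ((γ p.1 : ℝ) - (γ p.2 : ℝ)) ^ 2) ∧
      (((∃ i, β i ≠ 0) ∨ ∃ j k, j < k ∧ γ j ≠ γ k) → deriv (deriv P) 1 < 0) := by
  classical
  -- abbreviations (plain lambda functions)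
  set F : ℝ → ℝ := fun z =>
    ((2 * s + t : ℝ) - ∑ i, (z ^ (β i) + z ^ (-β i))) ^ 2 - ∑ j, ∑ k, z ^ (γ j - γ k)
    with hFdef
  set F1 : ℝ → ℝ := fun z =>
    2 * ((2 * s + t : ℝ) - ∑ i, (z ^ (β i) + z ^ (-β i))) *
      (-(∑ i, ((β i : ℝ) * z ^ (β i - 1) + (-β i : ℝ) * z ^ (-β i - 1)))) -
    ∑ j, ∑ k, ((γ j - γ k : ℤ) : ℝ) * z ^ (γ j - γ k - 1)
    with hF1def
  -- Step 1 : P = F away from 0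
  have hPF : ∀ z : ℝ, z ≠ 0 → P z = F z := by
    intro z hz
    have hAinv : A z⁻¹ = A z := by
      rw [hA, hA]
      congr 1
      refine Finset.sum_congr rfl fun i _ => ?_
      rw [inv_zpow', inv_zpow', neg_neg, add_comm]
    have hBB : B z * B z⁻¹ = ∑ j, ∑ k, z ^ (γ j - γ k) := by
      rw [hB, hB, neg_mul_neg, Finset.sum_mul_sum]
      refine Finset.sum_congr rfl fun j _ => Finset.sum_congr rfl fun k _ => ?_
      rw [inv_zpow', ← zpow_add₀ hz, sub_eq_add_neg]
    rw [hP, hAinv, hBB, hFdef, hA]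
    ring
  -- Step 2 : F has derivative F1 away from 0
  have hFd : ∀ z : ℝ, z ≠ 0 → HasDerivAt F (F1 z) z := by
    intro z hz
    have h1 := ((sum_pm_hasDerivAt β hz).const_sub ((2 * s + t : ℝ))).pow 2
    have h2 := dsum_hasDerivAt (fun j k => γ j - γ k) hz
    have h3 : HasDerivAt (fun z : ℝ => ((2 * s + t : ℝ) - ∑ i, (z ^ (β i) + z ^ (-β i))) ^ 2 -
        ∑ j, ∑ k, z ^ (γ j - γ k)) _ z := h1.sub h2
    rw [hFdef, hF1def]
    convert h3 using 1
    push_cast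
    ring
  -- Step 3 : deriv P = F1 near 1
  have hne : {z : ℝ | z ≠ 0} ∈ nhds (1 : ℝ) := by
    refine IsOpen.mem_nhds isOpen_ne ?_
    simp
  have hderivP : deriv P =ᶠ[nhds (1 : ℝ)] F1 := by
    filter_upwards [hne] with z hz
    have hx : P =ᶠ[nhds z] F := by
      filter_upwards [IsOpen.mem_nhds isOpen_ne hz] with w hw
      exact hPF w hw
    rw [Filter.EventuallyEq.deriv_eq hx]
    exact (hFd z hz).deriv
  -- Step 4 : F1 has an explicit derivative at 1
  have hu : HasDerivAt (fun z : ℝ => 2 * ((2 * s + t : ℝ) - ∑ i, (z ^ (β i) + z ^ (-β i))))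
      (2 * (-(∑ i, ((β i : ℝ) * (1:ℝ) ^ (β i - 1) + (-β i : ℝ) * (1:ℝ) ^ (-β i - 1))))) 1 :=
    ((sum_pm_hasDerivAt β one_ne_zero).const_sub ((2 * s + t : ℝ))).const_mul 2
  have hv : HasDerivAt
      (fun z : ℝ => -(∑ i, ((β i : ℝ) * z ^ (β i - 1) + (-β i : ℝ) * z ^ (-β i - 1))))
      (-(∑ i, ((β i : ℝ) * (((β i - 1 : ℤ) : ℝ) * (1:ℝ) ^ (β i - 1 - 1)) +
        (-β i : ℝ) * (((-β i - 1 : ℤ) : ℝ) * (1:ℝ) ^ (-β i - 1 - 1))))) 1 :=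
    (sum2_hasDerivAt (fun i => (β i : ℝ)) (fun i => (-β i : ℝ))
      (fun i => β i - 1) (fun i => -β i - 1) one_ne_zero).neg
  have hg := dsum2_hasDerivAt (fun j k => ((γ j - γ k : ℤ) : ℝ))
      (fun j k => γ j - γ k - 1) (one_ne_zero : (1:ℝ) ≠ 0)
  have hF1d := (hu.mul hv).sub hg
  replace hF1d : HasDerivAt F1 _ 1 := hF1d
  -- value of deriv (deriv P) 1
  have hval : deriv (deriv P) 1 =
      -2 * (2 * t * ∑ j, (β j : ℝ) ^ 2 +
        ∑ p ∈ (Finset.univ : Finset (Fin t × Fin t)).filter fun p => p.1 < p.2,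
          ((γ p.1 : ℝ) - (γ p.2 : ℝ)) ^ 2) := by
    rw [Filter.EventuallyEq.deriv_eq hderivP, hF1d.deriv]
    have e1 : (∑ i, ((β i : ℝ) * (1:ℝ) ^ (β i - 1) + (-β i : ℝ) * (1:ℝ) ^ (-β i - 1))) = 0 := by
      simp [one_zpow]
    have e2 : (∑ i, ((1:ℝ) ^ (β i) + (1:ℝ) ^ (-β i))) = 2 * s := by
      simp [one_zpow]; ring
    have e3 : (∑ i, ((β i : ℝ) * (((β i - 1 : ℤ) : ℝ) * (1:ℝ) ^ (β i - 1 - 1)) +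
        (-β i : ℝ) * (((-β i - 1 : ℤ) : ℝ) * (1:ℝ) ^ (-β i - 1 - 1))))
        = 2 * ∑ j, (β j : ℝ) ^ 2 := by
      rw [Finset.mul_sum]
      refine Finset.sum_congr rfl fun i _ => ?_
      simp only [one_zpow, mul_one]
      push_cast
      ring
    have e4 : (∑ j, ∑ k, ((γ j - γ k : ℤ) : ℝ) *
        (((γ j - γ k - 1 : ℤ) : ℝ) * (1:ℝ) ^ (γ j - γ k - 1 - 1)))
        = 2 * ∑ p ∈ (Finset.univ : Finset (Fin t × Fin t)).filter fun p => p.1 < p.2,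
          ((γ p.1 : ℝ) - (γ p.2 : ℝ)) ^ 2 := by
      have : (∑ j, ∑ k, ((γ j - γ k : ℤ) : ℝ) *
          (((γ j - γ k - 1 : ℤ) : ℝ) * (1:ℝ) ^ (γ j - γ k - 1 - 1)))
          = ∑ j, ∑ k, (((γ j : ℝ) - γ k) ^ 2 - ((γ j : ℝ) - γ k)) := by
        refine Finset.sum_congr rfl fun j _ => Finset.sum_congr rfl fun k _ => ?_
        simp only [one_zpow, mul_one]
        push_cast
        ring
      rw [this]
      have hsplit : ∑ j, ∑ k, (((γ j : ℝ) - γ k) ^ 2 - ((γ j : ℝ) - γ k))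
          = (∑ j, ∑ k, ((γ j : ℝ) - γ k) ^ 2) - ∑ j, ∑ k, ((γ j : ℝ) - γ k) := by
        rw [← Finset.sum_sub_distrib]
        refine Finset.sum_congr rfl fun j _ => ?_
        rw [← Finset.sum_sub_distrib]
      rw [hsplit, dsum_sub_zero, dsum_sq_eq, sub_zero]
    rw [e1, e2, e3, e4]
    ring
  refine ⟨hval, fun h => ?_⟩
  rw [hval]
  have hK : (0:ℝ) ≤ ∑ j, (β j : ℝ) ^ 2 := Finset.sum_nonneg fun j _ => sq_nonneg _
  have hL : (0:ℝ) ≤ ∑ p ∈ (Finset.univ : Finset (Fin t × Fin t)).filter fun p => p.1 < p.2,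
      ((γ p.1 : ℝ) - (γ p.2 : ℝ)) ^ 2 := Finset.sum_nonneg fun p _ => sq_nonneg _
  have ht' : (1:ℝ) ≤ t := by exact_mod_cast ht
  rcases h with ⟨i, hi⟩ | ⟨j, k, hjk, hne'⟩
  · have hpos : (0:ℝ) < (β i : ℝ) ^ 2 := by
      have : (β i : ℝ) ≠ 0 := Int.cast_ne_zero.mpr hi
      positivity
    have hK' : (β i : ℝ) ^ 2 ≤ ∑ j, (β j : ℝ) ^ 2 :=
      Finset.single_le_sum (f := fun j : Fin s => (β j : ℝ) ^ 2)
        (fun j _ => sq_nonneg _) (Finset.mem_univ i)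
    nlinarith
  · have hmem : (j, k) ∈ (Finset.univ : Finset (Fin t × Fin t)).filter fun p => p.1 < p.2 := by
      simp [hjk]
    have hpos : (0:ℝ) < ((γ j : ℝ) - (γ k : ℝ)) ^ 2 := by
      have : ((γ j : ℝ) - (γ k : ℝ)) ≠ 0 := by
        simp only [sub_ne_zero]
        exact_mod_cast hne'
      positivity
    have hL' : ((γ j : ℝ) - (γ k : ℝ)) ^ 2 ≤
        ∑ p ∈ (Finset.univ : Finset (Fin t × Fin t)).filter fun p => p.1 < p.2,
          ((γ p.1 : ℝ) - (γ p.2 : ℝ)) ^ 2 :=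
      Finset.single_le_sum (f := fun p : Fin t × Fin t => ((γ p.1 : ℝ) - (γ p.2 : ℝ)) ^ 2)
        (fun p _ => sq_nonneg _) hmem
    nlinarith
end

section
/- Suppose gcd(β_1,...,β_s, γ_j − γ_k for 1 ≤ j < k ≤ t) = 1. Then for every real φ, P(e^{iφ}) ≥ 0, and P(e^{iφ}) = 0 if and only if e^{iφ} = 1. -/
/-!
On the unit circle put `u_i = z ^ β_i` and `w_j = z ^ γ_j`, all of modulus one. Then
`z ^ β_i + z ^ (-β_i) = 2 - |1 - u_i|²`, so `A(z) = t + X` with `X = ∑ |1 - u_i|²`, while the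
Lagrange-type identity `∑_{j,k} |w_j - w_k|² = 2t ∑ |w_j|² - 2|∑ w_j|²` gives
`|B(z)|² = t² - Y/2` with `Y = ∑_{j,k} |w_j - w_k|²`. Since `A(z⁻¹) = A(z)` and
`B(z⁻¹) = conj B(z)`, `P(z) = 2tX + X² + Y/2 ≥ 0`, and `P(z) = 0` forces `z ^ β_i = 1` and
`z ^ (γ_j - γ_k) = 1` for all indices, hence `z ^ g = 1` for the gcd `g = 1` of these exponents.
-/

open Complex ComplexConjugate

theorem zpow_finset_gcd_eq_one {G ι : Type*} [Group G] {x : G} {S : Finset ι} {f : ι → ℤ}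
    (h : ∀ i ∈ S, x ^ f i = 1) : x ^ S.gcd f = 1 :=
  orderOf_dvd_iff_zpow_eq_one.1 <|
    Finset.dvd_gcd fun i hi => orderOf_dvd_iff_zpow_eq_one.2 (h i hi)

theorem zpow_gcd_eq_one {G : Type*} [Group G] {x : G} {m n : ℤ} (hm : x ^ m = 1)
    (hn : x ^ n = 1) : x ^ GCDMonoid.gcd m n = 1 :=
  orderOf_dvd_iff_zpow_eq_one.1 <|
    dvd_gcd (orderOf_dvd_iff_zpow_eq_one.2 hm) (orderOf_dvd_iff_zpow_eq_one.2 hn)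

theorem Complex.ofReal_norm_one_sub_sq {u : ℂ} (hu : ‖u‖ = 1) :
    ((‖1 - u‖ ^ 2 : ℝ) : ℂ) = 2 - (u + u⁻¹) := by
  have hu0 : u ≠ 0 := norm_ne_zero_iff.1 (by rw [hu]; exact one_ne_zero)
  rw [ofReal_pow, ← mul_conj', map_sub, map_one, ← inv_eq_conj hu]
  field_simp
  ring

theorem sum_sum_norm_sub_sq {E ι : Type*} [NormedAddCommGroup E] [InnerProductSpace ℝ E]
    (S : Finset ι) (w : ι → E) :
    ∑ j ∈ S, ∑ k ∈ S, ‖w j - w k‖ ^ 2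
      = 2 * S.card * ∑ j ∈ S, ‖w j‖ ^ 2 - 2 * ‖∑ j ∈ S, w j‖ ^ 2 := by
  simp_rw [norm_sub_sq_real, ← real_inner_self_eq_norm_sq, sum_inner, inner_sum,
    Finset.sum_add_distrib, Finset.sum_sub_distrib, Finset.sum_const, nsmul_eq_mul,
    ← Finset.mul_sum]
  ring

noncomputable section

variable {s t : ℕ}

def laurentA (t : ℕ) (β : Fin s → ℕ) (z : ℂ) : ℂ :=
  (2 * s + t : ℂ) - ∑ i, (z ^ (β i : ℤ) + z ^ (-(β i : ℤ)))

def laurentB (γ : Fin t → ℕ) (z : ℂ) : ℂ := -∑ j, z ^ (γ j : ℤ)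

def laurentP (t : ℕ) (β : Fin s → ℕ) (γ : Fin t → ℕ) (z : ℂ) : ℂ :=
  laurentA t β z * laurentA t β z⁻¹ - laurentB γ z * laurentB γ z⁻¹

def defectA (β : Fin s → ℕ) (z : ℂ) : ℝ := ∑ i, ‖1 - z ^ (β i : ℤ)‖ ^ 2

def defectB (γ : Fin t → ℕ) (z : ℂ) : ℝ := ∑ j, ∑ k, ‖z ^ (γ j : ℤ) - z ^ (γ k : ℤ)‖ ^ 2

theorem laurentA_inv (β : Fin s → ℕ) (z : ℂ) : laurentA t β z⁻¹ = laurentA t β z := by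
  simp only [laurentA, inv_zpow', neg_neg, add_comm]

theorem laurentA_eq_of_norm_eq_one (β : Fin s → ℕ) {z : ℂ} (hz : ‖z‖ = 1) :
    laurentA t β z = ((t + defectA β z : ℝ) : ℂ) := by
  have hu : ∀ i, ‖z ^ (β i : ℤ)‖ = 1 := fun i => by rw [norm_zpow, hz, one_zpow]
  simp only [laurentA, defectA, ofReal_add, ofReal_natCast, ofReal_sum,
    ofReal_norm_one_sub_sq (hu _), zpow_neg, Finset.sum_sub_distrib, Finset.sum_const,
    Finset.card_univ, Fintype.card_fin, nsmul_eq_mul]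
  ring

theorem laurentB_inv_of_norm_eq_one (γ : Fin t → ℕ) {z : ℂ} (hz : ‖z‖ = 1) :
    laurentB γ z⁻¹ = conj (laurentB γ z) := by
  simp only [laurentB, inv_eq_conj hz, map_neg, map_sum, map_zpow₀]

theorem norm_laurentB_sq (γ : Fin t → ℕ) {z : ℂ} (hz : ‖z‖ = 1) :
    ‖laurentB γ z‖ ^ 2 = t ^ 2 - defectB γ z / 2 := by
  have := sum_sum_norm_sub_sq Finset.univ fun j => z ^ (γ j : ℤ)
  simp only [norm_zpow, hz, one_zpow, one_pow, Finset.sum_const, Finset.card_univ,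
    Fintype.card_fin, nsmul_eq_mul, mul_one] at this
  rw [laurentB, norm_neg, defectB, this]
  ring

theorem laurentP_eq_of_norm_eq_one (β : Fin s → ℕ) (γ : Fin t → ℕ) {z : ℂ} (hz : ‖z‖ = 1) :
    laurentP t β γ z = ((2 * t * defectA β z + defectA β z ^ 2 + defectB γ z / 2 : ℝ) : ℂ) := by
  rw [laurentP, laurentA_inv, laurentB_inv_of_norm_eq_one γ hz, mul_conj', ← ofReal_pow,
    norm_laurentB_sq γ hz, laurentA_eq_of_norm_eq_one β hz]
  push_cast
  ring

theorem defectA_nonneg (β : Fin s → ℕ) (z : ℂ) : 0 ≤ defectA β z := by unfold defectA; positivity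

theorem defectB_nonneg (γ : Fin t → ℕ) (z : ℂ) : 0 ≤ defectB γ z := by unfold defectB; positivity

theorem defectA_eq_zero_iff (β : Fin s → ℕ) (z : ℂ) :
    defectA β z = 0 ↔ ∀ i, z ^ (β i : ℤ) = 1 := by
  simp only [defectA, Fintype.sum_eq_zero_iff_of_nonneg fun _ => sq_nonneg _, funext_iff,
    Pi.zero_apply, sq_eq_zero_iff, norm_eq_zero, sub_eq_zero, eq_comm (a := (1 : ℂ))]

theorem defectB_eq_zero_iff (γ : Fin t → ℕ) (z : ℂ) :
    defectB γ z = 0 ↔ ∀ j k, z ^ (γ j : ℤ) = z ^ (γ k : ℤ) := by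
  simp only [defectB,
    Fintype.sum_eq_zero_iff_of_nonneg fun _ => Finset.sum_nonneg fun _ _ => sq_nonneg _,
    Fintype.sum_eq_zero_iff_of_nonneg fun _ => sq_nonneg _, funext_iff,
    Pi.zero_apply, sq_eq_zero_iff, norm_eq_zero, sub_eq_zero]

theorem eq_one_of_zpow_eq_one_of_gcd_eq_one (β : Fin s → ℕ) (γ : Fin t → ℕ) {z : ℂ} (hz : z ≠ 0)
    (hgcd : GCDMonoid.gcd ((Finset.univ : Finset (Fin s)).gcd fun i => (β i : ℤ))
        (((Finset.univ : Finset (Fin t × Fin t)).filter fun p => p.1 < p.2).gcd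
          fun p => (γ p.1 : ℤ) - (γ p.2 : ℤ)) = 1)
    (hβ : ∀ i, z ^ (β i : ℤ) = 1) (hγ : ∀ j k, z ^ (γ j : ℤ) = z ^ (γ k : ℤ)) : z = 1 := by
  let u := Units.mk0 z hz
  have hu : ∀ n : ℤ, z ^ n = 1 → u ^ n = 1 := fun n h => Units.ext (by simpa [u] using h)
  suffices u ^ (1 : ℤ) = 1 by simpa [u, Units.ext_iff] using this
  rw [← hgcd]
  refine zpow_gcd_eq_one (zpow_finset_gcd_eq_one fun i _ => hu _ (hβ i))
    (zpow_finset_gcd_eq_one fun p _ => hu _ ?_)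
  rw [zpow_sub₀ hz, hγ p.1 p.2, div_self (zpow_ne_zero _ hz)]

end

theorem stmt8_general (s t : ℕ) (β : Fin s → ℕ)
    (γ : Fin t → ℕ) (A B P : ℂ → ℂ)
    (hA : ∀ z : ℂ, A z = (2 * s + t : ℂ) - ∑ i, (z ^ (β i : ℤ) + z ^ (-(β i : ℤ))))
    (hB : ∀ z : ℂ, B z = -∑ j, z ^ (γ j : ℤ))
    (hP : ∀ z : ℂ, z ≠ 0 → P z = A z * A z⁻¹ - B z * B z⁻¹)
    (hgcd : GCDMonoid.gcd ((Finset.univ : Finset (Fin s)).gcd fun i => (β i : ℤ))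
        (((Finset.univ : Finset (Fin t × Fin t)).filter fun p => p.1 < p.2).gcd
          fun p => (γ p.1 : ℤ) - (γ p.2 : ℤ)) = 1) :
    ∀ φ : ℝ,
      (P (Complex.exp (φ * Complex.I))).im = 0 ∧
      0 ≤ (P (Complex.exp (φ * Complex.I))).re ∧
      (P (Complex.exp (φ * Complex.I)) = 0 ↔ Complex.exp (φ * Complex.I) = 1) := by
  obtain rfl : A = laurentA t β := funext hA
  obtain rfl : B = laurentB γ := funext hB
  intro φ
  set z := exp (φ * I)
  have hz0 : z ≠ 0 := exp_ne_zero _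
  have hPz : P z = ((2 * t * defectA β z + defectA β z ^ 2 + defectB γ z / 2 : ℝ) : ℂ) :=
    (hP z hz0).trans (laurentP_eq_of_norm_eq_one β γ (norm_exp_ofReal_mul_I φ))
  have hX := defectA_nonneg β z
  have hY := defectB_nonneg γ z
  refine ⟨by rw [hPz, ofReal_im], by rw [hPz, ofReal_re]; positivity, ?_⟩
  rw [hPz, ofReal_eq_zero]
  constructor
  · intro hP0
    have hX0 : defectA β z = 0 := by nlinarith
    have hY0 : defectB γ z = 0 := by nlinarith
    exact eq_one_of_zpow_eq_one_of_gcd_eq_one β γ hz0 hgcd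
      ((defectA_eq_zero_iff β z).1 hX0) ((defectB_eq_zero_iff γ z).1 hY0)
  · intro hz1
    simp [defectA, defectB, hz1]

theorem stmt8 (s t : ℕ) (ht : 1 ≤ t) (β : Fin s → ℕ) (hβpos : ∀ i, 0 < β i)
    (γ : Fin t → ℕ) (A B P : ℂ → ℂ)
    (hA : ∀ z : ℂ, A z = (2 * s + t : ℂ) - ∑ i, (z ^ (β i : ℤ) + z ^ (-(β i : ℤ))))
    (hB : ∀ z : ℂ, B z = -∑ j, z ^ (γ j : ℤ))
    (hP : ∀ z : ℂ, z ≠ 0 → P z = A z * A z⁻¹ - B z * B z⁻¹)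
    (hgcd : GCDMonoid.gcd ((Finset.univ : Finset (Fin s)).gcd fun i => (β i : ℤ))
        (((Finset.univ : Finset (Fin t × Fin t)).filter fun p => p.1 < p.2).gcd
          fun p => (γ p.1 : ℤ) - (γ p.2 : ℤ)) = 1) :
    ∀ φ : ℝ,
      (P (Complex.exp (φ * Complex.I))).im = 0 ∧
      0 ≤ (P (Complex.exp (φ * Complex.I))).re ∧
      (P (Complex.exp (φ * Complex.I)) = 0 ↔ Complex.exp (φ * Complex.I) = 1) :=
  stmt8_general s t β γ A B P hA hB hP hgcd
end

section
/- Let P(z) be a Laurent polynomial with P(z) = P(1/z), P(1) = P′(1) = 0, P″(1) = −2q ≠ 0, leading coefficient η, and let its roots different from 1 be z_1, 1/z_1, ..., z_{r−1}, 1/z_{r−1}. Then for τ(n) = (t/n) ∏_{j=1}^{n−1} P(ε_n^j) one has τ(n) = ((−1)^{r(n−1)+1} n t η^n / q) ∏_{P(z)=0, z≠1} (z^n − 1). -/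
open Complex Finset Filter

-- second derivative aux
lemma aux_dd (G P : ℂ → ℂ) (hG : AnalyticAt ℂ G 1)
    (hPG : ∀ᶠ w in nhds (1:ℂ), P w = (w - 1)^2 * G w) :
    deriv (deriv P) 1 = 2 * G 1 := by
  have hGd : ∀ᶠ w in nhds (1:ℂ), AnalyticAt ℂ G w := hG.eventually_analyticAt
  have hdP : deriv P =ᶠ[nhds (1:ℂ)]
      fun w => 2*(w-1)*G w + (w-1)^2 * deriv G w := by
    have h1 : deriv P =ᶠ[nhds (1:ℂ)] deriv (fun w => (w-1)^2 * G w) :=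
      Filter.EventuallyEq.deriv hPG
    refine h1.trans ?_
    filter_upwards [hGd] with w hw
    have hd : HasDerivAt (fun w : ℂ => (w-1)^2 * G w)
        (2*(w-1)*G w + (w-1)^2 * deriv G w) w := by
      have h2 : HasDerivAt (fun w : ℂ => (w-1)^2) (2*(w-1)) w := by
        simpa using (((hasDerivAt_id w).sub_const 1).fun_pow 2)
      simpa [mul_comm, mul_assoc] using h2.fun_mul hw.differentiableAt.hasDerivAt
    exact hd.deriv
  rw [hdP.deriv_eq]
  have hdG1 : DifferentiableAt ℂ (deriv G) 1 := by
    have h1 : AnalyticAt ℂ (fderiv ℂ G) 1 := hG.fderiv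
    have h2 : deriv G = fun y => (ContinuousLinearMap.apply ℂ ℂ (1:ℂ)) (fderiv ℂ G y) := by
      funext y; rw [ContinuousLinearMap.apply_apply, fderiv_apply_one_eq_deriv]
    rw [h2]
    exact ((ContinuousLinearMap.apply ℂ ℂ (1:ℂ)).differentiable.differentiableAt).comp 1
      h1.differentiableAt
  have hA : HasDerivAt (fun w : ℂ => 2*(w-1)*G w)
      (2 * G 1 + 2*((1:ℂ)-1) * deriv G 1) 1 := by
    have h2 : HasDerivAt (fun w : ℂ => 2*(w-1)) 2 1 := by
      simpa using ((hasDerivAt_id (1:ℂ)).sub_const 1).const_mul 2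
    simpa [mul_comm] using h2.fun_mul hG.differentiableAt.hasDerivAt
  have hB : HasDerivAt (fun w : ℂ => (w-1)^2 * deriv G w)
      (2*((1:ℂ)-1) * deriv G 1 + ((1:ℂ)-1)^2 * deriv (deriv G) 1) 1 := by
    have h2 : HasDerivAt (fun w : ℂ => (w-1)^2) (2*((1:ℂ)-1)) 1 := by
      simpa using (((hasDerivAt_id (1:ℂ)).sub_const 1).fun_pow 2)
    simpa [mul_comm] using h2.fun_mul hdG1.hasDerivAt
  have := (hA.fun_add hB).deriv
  simp at this
  simpa using this


lemma aux_prod {n : ℕ} (hn : 1 ≤ n) {ε : ℂ} (hprim : IsPrimitiveRoot ε n) (x : ℂ) :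
    (x - 1) * ∏ j ∈ Finset.Ico 1 n, (x - ε ^ j) = x ^ n - 1 := by
  have h := X_pow_sub_C_eq_prod hprim (show 0 < n by omega) (one_pow n)
  apply_fun Polynomial.eval x at h
  simp only [Polynomial.eval_sub, Polynomial.eval_pow, Polynomial.eval_X, Polynomial.eval_C,
    Polynomial.eval_prod, mul_one] at h
  rw [h, Finset.range_eq_Ico, Finset.prod_eq_prod_Ico_succ_bot (by omega : 0 < n)]
  simp

lemma aux_n {n : ℕ} (hn : 1 ≤ n) {ε : ℂ} (hprim : IsPrimitiveRoot ε n) :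
    ∏ j ∈ Finset.Ico 1 n, (1 - ε ^ j) = (n : ℂ) := by
  obtain ⟨m, rfl⟩ : ∃ m, n = m + 1 := ⟨n - 1, by omega⟩
  have h := hprim.prod_one_sub_pow_eq_order
  rw [Finset.prod_Ico_eq_prod_range]
  simpa [add_comm] using h

lemma aux_sign {n : ℕ} (hn : 1 ≤ n) :
    (Complex.exp (2 * Real.pi * Complex.I / n)) ^ (∑ i ∈ Finset.range n, i)
      = (-1 : ℂ) ^ (n - 1) := by
  set S := ∑ i ∈ Finset.range n, i with hS
  have h2S : (S : ℂ) * 2 = n * (n - 1) := by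
    have := Finset.sum_range_id_mul_two n
    rw [← hS] at this
    have := congrArg (Nat.cast : ℕ → ℂ) this
    push_cast [Nat.cast_sub hn] at this
    push_cast
    linear_combination this
  have hn0 : (n : ℂ) ≠ 0 := Nat.cast_ne_zero.mpr (by omega)
  rw [← Complex.exp_nat_mul]
  have : (S : ℂ) * (2 * Real.pi * Complex.I / n) = ((n - 1 : ℕ) : ℂ) * (Real.pi * Complex.I) := by
    push_cast [Nat.cast_sub hn]
    field_simp
    linear_combination h2S
  rw [this, Complex.exp_nat_mul, Complex.exp_pi_mul_I]

lemma aux_q (r : ℕ) (η q : ℂ)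
    (P : ℂ → ℂ) (z : Fin (r - 1) → ℂ)
    (hP : ∀ w : ℂ, w ≠ 0 →
      P w = η * w ^ (-(r : ℤ)) * (w - 1) ^ 2 * ∏ j, ((w - z j) * (w - (z j)⁻¹)))
    (hq : deriv (deriv P) 1 = -2 * q) :
    q = -(η * ∏ j, ((1 - z j) * (1 - (z j)⁻¹))) := by
  set G : ℂ → ℂ := fun w => η * (w^r)⁻¹ * ∏ j, ((w - z j) * (w - (z j)⁻¹)) with hG
  have hGa : AnalyticAt ℂ G 1 := by
    apply AnalyticAt.mul
    · exact analyticAt_const.mul ((analyticAt_id.pow r).inv (by simp))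
    · exact Finset.analyticAt_fun_prod _ (fun j _ =>
        (analyticAt_id.sub analyticAt_const).mul (analyticAt_id.sub analyticAt_const))
  have hPG : ∀ᶠ w in nhds (1:ℂ), P w = (w-1)^2 * G w := by
    filter_upwards [eventually_ne_nhds (one_ne_zero : (1:ℂ) ≠ 0)] with w hw
    rw [hP w hw, hG]
    have hzw : w ^ (-(r:ℤ)) = (w^r)⁻¹ := by rw [zpow_neg, zpow_natCast]
    rw [hzw]; ring
  have h := aux_dd G P hGa hPG
  rw [hq] at h
  have hG1 : G 1 = η * ∏ j, ((1 - z j) * (1 - (z j)⁻¹)) := by simp [hG]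
  rw [← hG1]
  linear_combination -h/2

/-- Counting formula: if `P` is a palindromic Laurent polynomial of degree `r` with
leading coefficient `η`, a double root at `1` (with `P''(1) = -2q ≠ 0`) and remaining
roots `z_1, 1/z_1, …, z_{r-1}, 1/z_{r-1}` all different from `1`, then
`τ(n) = (t/n) ∏_{j=1}^{n-1} P(ε_n^j)` equals
`(-1)^{r(n-1)+1} n t η^n / q · ∏_{P(z)=0, z≠1} (z^n - 1)`. -/
theorem stmt13 (r : ℕ) (hr : 1 ≤ r) (η q t : ℂ) (hη : η ≠ 0) (hq0 : q ≠ 0)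
    (P : ℂ → ℂ) (z : Fin (r - 1) → ℂ) (hz0 : ∀ j, z j ≠ 0) (hz1 : ∀ j, z j ≠ 1)
    (hP : ∀ w : ℂ, w ≠ 0 →
      P w = η * w ^ (-(r : ℤ)) * (w - 1) ^ 2 * ∏ j, ((w - z j) * (w - (z j)⁻¹)))
    (hq : deriv (deriv P) 1 = -2 * q)
    (n : ℕ) (hn : 1 ≤ n) (ε : ℂ) (hε : ε = Complex.exp (2 * Real.pi * Complex.I / n)) :
    (t / n) * ∏ j ∈ Finset.Ico 1 n, P (ε ^ j) =
      (-1 : ℂ) ^ (r * (n - 1) + 1) * n * t * η ^ n / q *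
        ∏ j, (((z j) ^ n - 1) * (((z j)⁻¹) ^ n - 1)) := by
  have hnne : n ≠ 0 := by omega
  have hn0 : (n : ℂ) ≠ 0 := Nat.cast_ne_zero.mpr hnne
  have hprim : IsPrimitiveRoot ε n := by
    rw [hε]; exact Complex.isPrimitiveRoot_exp n hnne
  have hε0 : ε ≠ 0 := by rw [hε]; exact Complex.exp_ne_zero _
  have hqC : q = -(η * ∏ j, ((1 - z j) * (1 - (z j)⁻¹))) := aux_q r η q P z hP hq
  set C := ∏ j, ((1 - z j) * (1 - (z j)⁻¹)) with hC
  have hC0 : C ≠ 0 := by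
    intro h; apply hq0; rw [hqC, h, mul_zero, neg_zero]
  -- rewrite each factor
  have hPe : ∀ j ∈ Finset.Ico 1 n, P (ε ^ j) =
      η * ((ε ^ j) ^ r)⁻¹ * (1 - ε ^ j) ^ 2 *
        ∏ k, ((z k - ε ^ j) * ((z k)⁻¹ - ε ^ j)) := by
    intro j hj
    rw [hP _ (pow_ne_zero _ hε0), zpow_neg, zpow_natCast]
    congr 1
    · ring
    · exact Finset.prod_congr rfl fun k _ => by ring
  rw [Finset.prod_congr rfl hPe]
  rw [Finset.prod_mul_distrib, Finset.prod_mul_distrib, Finset.prod_mul_distrib]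
  have hcard : (Finset.Ico 1 n).card = n - 1 := by simp
  -- piece A
  have hA : ∏ _j ∈ Finset.Ico 1 n, η = η ^ (n - 1) := by
    rw [Finset.prod_const, hcard]
  -- piece B
  have hB : ∏ j ∈ Finset.Ico 1 n, ((ε ^ j) ^ r)⁻¹ = (-1 : ℂ) ^ (r * (n - 1)) := by
    rw [Finset.prod_inv_distrib, Finset.prod_pow, Finset.prod_pow_eq_pow_sum]
    have hsum : ∑ j ∈ Finset.Ico 1 n, j = ∑ i ∈ Finset.range n, i := by
      rw [Finset.range_eq_Ico, Finset.sum_eq_sum_Ico_succ_bot (by omega : 0 < n)]; simp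
    rw [hsum, hε, aux_sign hn, ← pow_mul, ← inv_pow]
    norm_num [mul_comm]
  -- piece D
  have hD : ∏ j ∈ Finset.Ico 1 n, (1 - ε ^ j) ^ 2 = (n : ℂ) ^ 2 := by
    rw [Finset.prod_pow, aux_n hn hprim]
  -- piece E
  have hE : ∀ x : ℂ, x ≠ 1 → ∏ j ∈ Finset.Ico 1 n, (x - ε ^ j) = (x ^ n - 1) / (x - 1) := by
    intro x hx
    rw [eq_div_iff (sub_ne_zero.mpr hx), mul_comm]
    exact aux_prod hn hprim x
  have hF : ∏ j ∈ Finset.Ico 1 n, ∏ k, ((z k - ε ^ j) * ((z k)⁻¹ - ε ^ j)) =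
      (∏ k, (((z k) ^ n - 1) * (((z k)⁻¹) ^ n - 1))) / C := by
    rw [Finset.prod_comm]
    have : ∀ k : Fin (r - 1),
        ∏ j ∈ Finset.Ico 1 n, ((z k - ε ^ j) * ((z k)⁻¹ - ε ^ j)) =
        (((z k) ^ n - 1) * (((z k)⁻¹) ^ n - 1)) / ((1 - z k) * (1 - (z k)⁻¹)) := by
      intro k
      have h1 : (z k)⁻¹ ≠ 1 := by
        rw [ne_eq, inv_eq_one]; exact hz1 k
      rw [Finset.prod_mul_distrib, hE _ (hz1 k), hE _ h1]
      rw [div_mul_div_comm]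
      congr 1
      ring
    rw [Finset.prod_congr rfl fun k _ => this k, Finset.prod_div_distrib, hC]
  rw [hA, hB, hD, hF, hqC]
  have hηn : η ^ n = η ^ (n - 1) * η := by
    rw [← pow_succ]; congr 1; omega
  have hs : (-1 : ℂ) ^ (r * (n - 1) + 1) = (-1 : ℂ) ^ (r * (n - 1)) * (-1) := by
    rw [pow_succ]
  rw [hηn, hs]
  field_simp
end

section
/- For P(z) = A(z)A(z^{-1}) − B(z)B(z^{-1}) with A(z) = 2s + t − Σ(z^{β_i} + z^{−β_i}) and B(z) = −Σ z^{γ_i}, one has P(−1) = 4(2β_odd + γ_even)(2β_odd + γ_odd), where β_odd is the number of odd β_i, and γ_even, γ_odd are the numbers of even and odd γ_j respectively. -/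
/-!
At `z = -1` we have `z⁻¹ = z`, so `P(-1) = A(-1)² - B(-1)²`, and `(-1)^k = ±1` according to the
parity of `k`. Hence `A(-1) = t + 4 β_odd` and `B(-1) = γ_odd - γ_even`; writing
`t = γ_even + γ_odd`, the difference of squares factors as `(2γ_even + 4β_odd)(2γ_odd + 4β_odd)`.
-/

open Finset

section Parity

variable {ι : Type*} [Fintype ι] (f : ι → ℤ)

lemma Fintype.card_eq_card_filter_even_add_card_filter_odd :
    Fintype.card ι = #{i | Even (f i)} + #{i | Odd (f i)} := by
  simpa only [Int.not_even_iff_odd, card_univ] using (card_filter_add_card_filter_not (s := univ)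
    (fun i => Even (f i))).symm

lemma sum_neg_one_zpow_eq_card_filter_even_sub_card_filter_odd {R : Type*} [DivisionRing R] :
    ∑ i, (-1 : R) ^ f i = #{i | Even (f i)} - #{i | Odd (f i)} := by
  simp only [neg_one_zpow_eq_ite, sum_ite, sum_const, Int.not_even_iff_odd, nsmul_eq_mul,
    mul_one, mul_neg, sub_eq_add_neg]

end Parity

theorem stmt16_general (s t : ℕ) (β : Fin s → ℤ) (γ : Fin t → ℤ)
    (A B P : ℂ → ℂ)
    (hA : ∀ z : ℂ, z ≠ 0 → A z = (2 * s + t : ℂ) - ∑ i, (z ^ (β i) + z ^ (-β i)))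
    (hB : ∀ z : ℂ, z ≠ 0 → B z = -∑ i, z ^ (γ i))
    (hP : ∀ z : ℂ, z ≠ 0 → P z = A z * A z⁻¹ - B z * B z⁻¹)
    (βodd γodd γeven : ℕ)
    (hβodd : βodd = (Finset.univ.filter fun i => Odd (β i)).card)
    (hγodd : γodd = (Finset.univ.filter fun j => Odd (γ j)).card)
    (hγeven : γeven = (Finset.univ.filter fun j => Even (γ j)).card) :
    P (-1) = 4 * (2 * βodd + γeven) * (2 * βodd + γodd) := by
  have hne : (-1 : ℂ) ≠ 0 := by norm_num
  have hs_card := Fintype.card_eq_card_filter_even_add_card_filter_odd β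
  have ht_card := Fintype.card_eq_card_filter_even_add_card_filter_odd γ
  rw [Fintype.card_fin] at hs_card ht_card
  have hA_neg_one : A (-1) = t + 4 * βodd := by
    simp only [hA _ hne, zpow_neg, ← inv_zpow, inv_neg_one, ← two_mul, ← mul_sum,
      sum_neg_one_zpow_eq_card_filter_even_sub_card_filter_odd, hβodd, hs_card]
    push_cast
    ring
  have hB_neg_one : B (-1) = γodd - γeven := by
    rw [hB _ hne, sum_neg_one_zpow_eq_card_filter_even_sub_card_filter_odd, hγeven, hγodd, neg_sub]
  rw [hP _ hne, inv_neg_one, hA_neg_one, hB_neg_one, ht_card, ← hγeven, ← hγodd]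
  push_cast
  ring

theorem stmt16 (s t : ℕ) (ht : 1 ≤ t) (β : Fin s → ℤ) (γ : Fin t → ℤ)
    (A B P : ℂ → ℂ)
    (hA : ∀ z : ℂ, z ≠ 0 → A z = (2 * s + t : ℂ) - ∑ i, (z ^ (β i) + z ^ (-β i)))
    (hB : ∀ z : ℂ, z ≠ 0 → B z = -∑ i, z ^ (γ i))
    (hP : ∀ z : ℂ, z ≠ 0 → P z = A z * A z⁻¹ - B z * B z⁻¹)
    (βodd γodd γeven : ℕ)
    (hβodd : βodd = (Finset.univ.filter fun i => Odd (β i)).card)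
    (hγodd : γodd = (Finset.univ.filter fun j => Odd (γ j)).card)
    (hγeven : γeven = (Finset.univ.filter fun j => Even (γ j)).card) :
    P (-1) = 4 * (2 * βodd + γeven) * (2 * βodd + γodd) :=
  stmt16_general s t β γ A B P hA hB hP βodd γodd γeven hβodd hγodd hγeven
end
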